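/- arXiv:1510.02643 — 2 statements merged into one kernel-verified Lean document; each statement's English description precedes it below -/
import Mathlib

section
/- Let G1 and G2 be cosimple, loopless, 2-edge-connected graphs on a common edge set with exactly three vertices each, with L(G1) = L(G2) and L(G1) having at least two circuits. If G1 has two parallel classes each of size at least three, then G1 and G2 are 2-isomorphic. -/
open Finset

/-- A multigraph with vertex type `V`, edge-label type `α`, edge set `E`,
and an endpoints function assigning to each edge an unordered pair of vertices. -/
structure MGraph (V : Type) (α : Type) where
  E : Finset α
  ends : α → Sym2 V

namespace MGraph

variable {V V₁ V₂ : Type} {α : Type} [DecidableEq V] [DecidableEq V₁] [DecidableEq V₂]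
  [DecidableEq α]

/-- `u` and `v` are joined by an edge of `X`. -/
def Adj (G : MGraph V α) (X : Finset α) (u v : V) : Prop :=
  ∃ e ∈ X, G.ends e = s(u, v)

/-- `v` is incident with an edge of `X`. -/
def VIn (G : MGraph V α) (X : Finset α) (v : V) : Prop :=
  ∃ e ∈ X, v ∈ G.ends e

/-- The degree of `v` in the edge set `X` (loops count twice). -/
def degIn (G : MGraph V α) (X : Finset α) (v : V) : ℕ :=
  ∑ e ∈ X, (if G.ends e = s(v, v) then 2 else if v ∈ G.ends e then 1 else 0)

/-- `C` is the edge set of a cycle of `G`: a nonempty connected 2-regular subgraph. -/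
def IsCycle (G : MGraph V α) (C : Finset α) : Prop :=
  C.Nonempty ∧ C ⊆ G.E ∧ (∀ v, G.VIn C v → G.degIn C v = 2) ∧
    ∀ u v, G.VIn C u → G.VIn C v → Relation.ReflTransGen (G.Adj C) u v

/-- The subgraph on edge set `X` contains at least two (distinct) cycles. -/
def TwoCycles (G : MGraph V α) (X : Finset α) : Prop :=
  ∃ C₁ C₂ : Finset α, G.IsCycle C₁ ∧ G.IsCycle C₂ ∧ C₁ ⊆ X ∧ C₂ ⊆ X ∧ C₁ ≠ C₂

/-- `X` is a circuit of the bicircular lift matroid `L(G)`: a minimal edge set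
containing at least two cycles. -/
def LiftCircuit (G : MGraph V α) (X : Finset α) : Prop :=
  X ⊆ G.E ∧ G.TwoCycles X ∧ ∀ Y ⊂ X, ¬ G.TwoCycles Y

/-- `X` is independent in the bicircular lift matroid `L(G)`. -/
def LiftIndep (G : MGraph V α) (X : Finset α) : Prop :=
  X ⊆ G.E ∧ ∀ C ⊆ X, ¬ G.LiftCircuit C

/-- `L(G)` has at least two circuits. -/
def TwoLiftCircuits (G : MGraph V α) : Prop :=
  ∃ X Y : Finset α, G.LiftCircuit X ∧ G.LiftCircuit Y ∧ X ≠ Y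

/-- Equality of the bicircular lift matroids `L(G₁) = L(G₂)` (equal ground sets
and equal circuit collections). -/
def LiftEq (G₁ : MGraph V₁ α) (G₂ : MGraph V₂ α) : Prop :=
  G₁.E = G₂.E ∧ ∀ X : Finset α, G₁.LiftCircuit X ↔ G₂.LiftCircuit X

/-- `G₁` and `G₂` are 2-isomorphic, i.e. their graphic matroids on the common
edge set are equal (equivalently, they have the same cycles). -/
def TwoIso (G₁ : MGraph V₁ α) (G₂ : MGraph V₂ α) : Prop :=
  G₁.E = G₂.E ∧ ∀ X : Finset α, G₁.IsCycle X ↔ G₂.IsCycle X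

/-- `G` has no loops. -/
def Loopless (G : MGraph V α) : Prop := ∀ e ∈ G.E, ¬ (G.ends e).IsDiag

/-- `G` is connected. -/
def Connected (G : MGraph V α) : Prop :=
  ∀ u v : V, Relation.ReflTransGen (G.Adj G.E) u v

/-- `G` is 2-edge-connected: every edge lies in a cycle. -/
def TwoEdgeConnected (G : MGraph V α) : Prop :=
  ∀ e ∈ G.E, ∃ C : Finset α, G.IsCycle C ∧ e ∈ C

/-- `e` is a cut-edge of `G`: an edge contained in no cycle. -/
def IsCutEdge (G : MGraph V α) (e : α) : Prop :=
  e ∈ G.E ∧ ∀ C : Finset α, G.IsCycle C → e ∉ C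

/-- Deletion of the edge `e` from `G`. -/
def delete (G : MGraph V α) (e : α) : MGraph V α :=
  ⟨G.E.erase e, G.ends⟩

/-- Restriction of `G` to the edge set `X`. -/
def restrict (G : MGraph V α) (X : Finset α) : MGraph V α :=
  ⟨G.E ∩ X, G.ends⟩

/-- Contraction of the link `e` with endpoints `u, v`: the edge `e` is deleted
and the vertex `v` is identified with `u`. -/
def contractLink (G : MGraph V α) (e : α) (u v : V) : MGraph V α :=
  ⟨G.E.erase e, fun f => (G.ends f).map (fun w => if w = v then u else w)⟩

/-- `X` is a circuit of the contraction `M/e`, where `M` is the matroid with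
circuit collection `Circ`: the circuits of `M/e` are the minimal nonempty sets of
the form `C \ {e}` with `C` a circuit of `M`. -/
def ContractCircuit (Circ : Finset α → Prop) (e : α) (X : Finset α) : Prop :=
  (X.Nonempty ∧ ∃ C : Finset α, Circ C ∧ X = C.erase e) ∧
    ∀ Y ⊂ X, ¬ (Y.Nonempty ∧ ∃ C : Finset α, Circ C ∧ Y = C.erase e)

/-- `e` and `f` form a series pair: no cycle contains exactly one of them. -/
def SeriesPair (G : MGraph V α) (e f : α) : Prop :=
  e ∈ G.E ∧ f ∈ G.E ∧ ∀ C : Finset α, G.IsCycle C → (e ∈ C ↔ f ∈ C)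

/-- `X` is a series class of `G`: a maximal set of pairwise series edges. -/
def SeriesClass (G : MGraph V α) (X : Finset α) : Prop :=
  X ⊆ G.E ∧ X.Nonempty ∧ (∀ e ∈ X, ∀ f ∈ X, G.SeriesPair e f) ∧
    ∀ g ∈ G.E, (∀ e ∈ X, G.SeriesPair e g) → g ∈ X

/-- `G` is cosimple: no cut-edges and no nontrivial series classes. -/
def CoSimple (G : MGraph V α) : Prop :=
  (∀ e ∈ G.E, ¬ G.IsCutEdge e) ∧
    ∀ e ∈ G.E, ∀ f ∈ G.E, e ≠ f → ¬ G.SeriesPair e f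

/-- `e` and `f` are parallel edges. -/
def Parallel (G : MGraph V α) (e f : α) : Prop :=
  e ≠ f ∧ G.IsCycle {e, f}

/-- `P` is a parallel class of `G`: a maximal set of pairwise parallel non-loop
edges. -/
def ParallelClass (G : MGraph V α) (P : Finset α) : Prop :=
  P ⊆ G.E ∧ P.Nonempty ∧ (∀ e ∈ P, ¬ (G.ends e).IsDiag) ∧
    (∀ e ∈ P, ∀ f ∈ P, e ≠ f → G.Parallel e f) ∧
    ∀ g ∈ G.E, g ∉ P → ¬ (G.ends g).IsDiag → ∃ e ∈ P, ¬ G.Parallel e g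

/-- `P` is the edge set of a path of `G`: nonempty, acyclic, connected, with all
degrees at most two. -/
def IsPath (G : MGraph V α) (P : Finset α) : Prop :=
  P.Nonempty ∧ P ⊆ G.E ∧ (∀ C ⊆ P, ¬ G.IsCycle C) ∧
    (∀ v, G.VIn P v → G.degIn P v ≤ 2) ∧
    ∀ u v, G.VIn P u → G.VIn P v → Relation.ReflTransGen (G.Adj P) u v

/-- `P` is the edge set of a path of `G` with end-vertices `x` and `y`. -/
def PathBetween (G : MGraph V α) (P : Finset α) (x y : V) : Prop :=
  G.IsPath P ∧ x ≠ y ∧ G.degIn P x = 1 ∧ G.degIn P y = 1 ∧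
    ∀ v, G.degIn P v = 1 → v = x ∨ v = y

/-- `P` is the edge set of an ear of `G`: a path contained in a cycle, whose
internal vertices have degree two in `G` and whose end-vertices have degree at
least three in `G`. -/
def IsEar (G : MGraph V α) (P : Finset α) : Prop :=
  G.IsPath P ∧ (∀ v, G.degIn P v = 2 → G.degIn G.E v = 2) ∧
    (∀ v, G.degIn P v = 1 → 3 ≤ G.degIn G.E v) ∧
    ∃ C : Finset α, G.IsCycle C ∧ P ⊆ C

/-- `G` is a subdivision of `K_2^n`: two distinct branch vertices joined by `n`
internally disjoint paths whose edge sets partition `E(G)`. -/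
def IsK2nSub (G : MGraph V α) (n : ℕ) : Prop :=
  ∃ x y : V, x ≠ y ∧ ∃ P : Fin n → Finset α,
    (G.E = Finset.univ.biUnion fun i => P i) ∧
    (∀ i j : Fin n, i ≠ j → Disjoint (P i) (P j)) ∧
    (∀ i : Fin n, G.PathBetween (P i) x y) ∧
    (∀ i j : Fin n, i ≠ j → ∀ v, G.VIn (P i) v → G.VIn (P j) v → v = x ∨ v = y)

/-- `G` is a subdivision of `K_2^n` with the edge `e` lying on one of the `n`
paths. -/
def IsK2nSubThrough (G : MGraph V α) (n : ℕ) (e : α) : Prop :=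
  ∃ x y : V, x ≠ y ∧ ∃ P : Fin n → Finset α,
    (G.E = Finset.univ.biUnion fun i => P i) ∧
    (∀ i j : Fin n, i ≠ j → Disjoint (P i) (P j)) ∧
    (∀ i : Fin n, G.PathBetween (P i) x y) ∧
    (∀ i j : Fin n, i ≠ j → ∀ v, G.VIn (P i) v → G.VIn (P j) v → v = x ∨ v = y) ∧
    ∃ i : Fin n, e ∈ P i

/-- `T` is the edge set of a spanning tree of `G`. -/
def IsSpanningTree (G : MGraph V α) (T : Finset α) : Prop :=
  T ⊆ G.E ∧ (∀ C ⊆ T, ¬ G.IsCycle C) ∧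
    ∀ u v : V, Relation.ReflTransGen (G.Adj T) u v

end MGraph

/-!
In a loopless graph a three-element circuit of the bicircular lift matroid is exactly a set of
three mutually parallel edges: two distinct cycles inside three edges must be two digons sharing
an edge, because a cycle through a parallel pair is that digon. Hence `L(G₁) = L(G₂)` makes every
parallel class of `G₁` with at least three edges a parallel class of `G₂`, with a possibly
different pair of ends. On three vertices there are only three non-diagonal pairs, so matching
the end pairs of the two big classes gives a bijection of the vertex sets carrying the ends of
every edge in `G₁` to its ends in `G₂` (the remaining edges have the third pair on both sides),
and such a bijection preserves cycles.
-/

theorem exists_finThree_equiv {V : Type} [Fintype V] (hV : Fintype.card V = 3) {a b c : V}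
    (hab : a ≠ b) (hac : a ≠ c) (hbc : b ≠ c) : ∃ f : Fin 3 ≃ V, f 0 = a ∧ f 1 = b ∧ f 2 = c := by
  have hinj : Function.Injective ![a, b, c] := by
    intro i j h
    fin_cases i <;> fin_cases j <;> simp_all [eq_comm]
  exact ⟨Equiv.ofBijective _ ((Fintype.bijective_iff_injective_and_card _).mpr
    ⟨hinj, by simp [hV]⟩), rfl, rfl, rfl⟩

namespace Sym2

variable {V : Type} [DecidableEq V] [Fintype V]

/-- On three vertices there are exactly three non-diagonal pairs. -/
theorem eq_of_ne_of_ne_of_card_eq_three (hV : Fintype.card V = 3) {s₁ s₂ s t : Sym2 V}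
    (h₁ : ¬ s₁.IsDiag) (h₂ : ¬ s₂.IsDiag) (hs : ¬ s.IsDiag) (ht : ¬ t.IsDiag) (h₁₂ : s₁ ≠ s₂)
    (hs₁ : s ≠ s₁) (hs₂ : s ≠ s₂) (ht₁ : t ≠ s₁) (ht₂ : t ≠ s₂) : s = t := by
  by_contra hst
  let S : Finset {a : Sym2 V // ¬ a.IsDiag} := {⟨s₁, h₁⟩, ⟨s₂, h₂⟩, ⟨s, hs⟩, ⟨t, ht⟩}
  have h4 : #S = 4 := by
    rw [card_insert_of_notMem, card_insert_of_notMem, card_pair] <;>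
      simp [h₁₂, hst, hs₁.symm, hs₂.symm, ht₁.symm, ht₂.symm]
  have hle := card_le_univ S
  rw [h4, Sym2.card_subtype_not_diag, hV] at hle
  norm_num at hle

theorem exists_eq_pair_of_ne_of_card_eq_three (hV : Fintype.card V = 3) {s₁ s₂ : Sym2 V}
    (h₁ : ¬ s₁.IsDiag) (h₂ : ¬ s₂.IsDiag) (h₁₂ : s₁ ≠ s₂) :
    ∃ a b c, a ≠ b ∧ a ≠ c ∧ b ≠ c ∧ s₁ = s(a, b) ∧ s₂ = s(a, c) := by
  induction s₁ using Sym2.ind with | h u v => ?_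
  have huv : u ≠ v := fun h => h₁ (Sym2.mk_isDiag_iff.mpr h)
  obtain ⟨w, -, hw⟩ := exists_mem_notMem_of_card_lt_card (s := {u, v}) (t := univ)
    (by rw [card_univ, hV]; exact card_le_two.trans_lt (by norm_num))
  simp only [mem_insert, mem_singleton, not_or] at hw
  obtain ⟨hwu, hwv⟩ := hw
  by_cases huw : s₂ = s(u, w)
  · exact ⟨u, v, w, huv, Ne.symm hwu, Ne.symm hwv, rfl, huw⟩
  · refine ⟨v, u, w, huv.symm, Ne.symm hwv, Ne.symm hwu, Sym2.eq_swap, ?_⟩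
    have hvw := Ne.symm hwv
    exact eq_of_ne_of_ne_of_card_eq_three hV h₁ (by simpa using Ne.symm hwu) h₂
      (by simpa using hvw) (by simp [hvw, Ne.symm hwu]) h₁₂.symm huw
      (by simp [hwu, huv.symm]) (by simp [huv.symm, hvw])

theorem exists_equiv_map_eq_of_card_eq_three {V₁ V₂ : Type} [DecidableEq V₁] [DecidableEq V₂]
    [Fintype V₁] [Fintype V₂] (hV₁ : Fintype.card V₁ = 3) (hV₂ : Fintype.card V₂ = 3)
    {s₁ s₂ : Sym2 V₁} {t₁ t₂ : Sym2 V₂} (hs₁ : ¬ s₁.IsDiag) (hs₂ : ¬ s₂.IsDiag)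
    (ht₁ : ¬ t₁.IsDiag) (ht₂ : ¬ t₂.IsDiag) (hs : s₁ ≠ s₂) (ht : t₁ ≠ t₂) :
    ∃ σ : V₁ ≃ V₂, s₁.map σ = t₁ ∧ s₂.map σ = t₂ := by
  obtain ⟨a, b, c, hab, hac, hbc, rfl, rfl⟩ :=
    exists_eq_pair_of_ne_of_card_eq_three hV₁ hs₁ hs₂ hs
  obtain ⟨x, y, z, hxy, hxz, hyz, rfl, rfl⟩ :=
    exists_eq_pair_of_ne_of_card_eq_three hV₂ ht₁ ht₂ ht
  obtain ⟨f, hfa, hfb, hfc⟩ := exists_finThree_equiv hV₁ hab hac hbc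
  obtain ⟨g, hgx, hgy, hgz⟩ := exists_finThree_equiv hV₂ hxy hxz hyz
  refine ⟨f.symm.trans g, ?_, ?_⟩ <;>
    simp [f.symm_apply_eq.mpr hfa.symm, f.symm_apply_eq.mpr hfb.symm,
      f.symm_apply_eq.mpr hfc.symm, hgx, hgy, hgz]

end Sym2

namespace MGraph

variable {V V₁ V₂ α : Type} [DecidableEq V] [DecidableEq V₁] [DecidableEq V₂]

theorem degIn_eq_card_filter {G : MGraph V α} (hl : G.Loopless) {X : Finset α} (hX : X ⊆ G.E)
    (v : V) : G.degIn X v = #{e ∈ X | v ∈ G.ends e} := by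
  rw [degIn, card_filter]
  refine sum_congr rfl fun e he => ?_
  rw [if_neg fun h => hl e (hX he) (by rw [h]; exact Sym2.mk_isDiag_iff.mpr rfl)]

theorem IsCycle.two_le_card {G : MGraph V α} (hl : G.Loopless) {C : Finset α}
    (hC : G.IsCycle C) : 2 ≤ #C := by
  obtain ⟨⟨e, he⟩, hCE, hdeg, -⟩ := hC
  obtain ⟨v, hv⟩ : ∃ v, v ∈ G.ends e := ⟨_, Sym2.out_fst_mem (G.ends e)⟩
  calc 2 = G.degIn C v := (hdeg v ⟨e, he, hv⟩).symm
    _ = #{g ∈ C | v ∈ G.ends g} := degIn_eq_card_filter hl hCE v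
    _ ≤ #C := card_filter_le _ _

theorem TwoCycles.three_le_card {G : MGraph V α} (hl : G.Loopless) {X : Finset α}
    (hX : G.TwoCycles X) : 3 ≤ #X := by
  obtain ⟨C₁, C₂, hC₁, hC₂, h₁, h₂, hne⟩ := hX
  by_contra! hlt
  have hfill : ∀ C, G.IsCycle C → C ⊆ X → C = X := fun C hC hCX =>
    eq_of_subset_of_card_le hCX (by have := hC.two_le_card hl; omega)
  exact hne ((hfill C₁ hC₁ h₁).trans (hfill C₂ hC₂ h₂).symm)

section

variable [DecidableEq α]

theorem isCycle_pair {G : MGraph V α} (hl : G.Loopless) {e f : α} (he : e ∈ G.E)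
    (hf : f ∈ G.E) (hef : e ≠ f) (hends : G.ends e = G.ends f) : G.IsCycle {e, f} := by
  have hsub : ({e, f} : Finset α) ⊆ G.E := insert_subset he (singleton_subset_iff.mpr hf)
  have hmem : ∀ w, G.VIn {e, f} w → ∀ g ∈ ({e, f} : Finset α), w ∈ G.ends g := by
    have hconst : ∀ g ∈ ({e, f} : Finset α), G.ends g = G.ends e := by simp [hends]
    rintro w ⟨g, hg, hw⟩ g' hg'
    rwa [hconst g' hg', ← hconst g hg]
  refine ⟨insert_nonempty _ _, hsub, fun w hw => ?_, fun u w hu hw => ?_⟩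
  · rw [degIn_eq_card_filter hl hsub, filter_true_of_mem (hmem w hw), card_pair hef]
  · by_cases huw : u = w
    · exact huw ▸ .refl
    · exact .single ⟨e, mem_insert_self _ _, ((Sym2.mem_and_mem_iff huw).mp
        ⟨hmem u hu e (mem_insert_self _ _), hmem w hw e (mem_insert_self _ _)⟩)⟩

theorem ends_eq_of_isCycle_pair {G : MGraph V α} (hl : G.Loopless) {e f : α} (hef : e ≠ f)
    (hC : G.IsCycle {e, f}) : G.ends e = G.ends f := by
  obtain ⟨-, hCE, hdeg, -⟩ := hC
  have hboth : ∀ w, G.VIn {e, f} w → w ∈ G.ends e ∧ w ∈ G.ends f := by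
    intro w hw
    have h2 := hdeg w hw
    rw [degIn_eq_card_filter hl hCE, ← card_pair hef, card_filter_eq_iff] at h2
    exact ⟨h2 e (mem_insert_self _ _), h2 f (by simp)⟩
  exact Sym2.ext fun w => ⟨fun h => (hboth w ⟨e, by simp, h⟩).2,
    fun h => (hboth w ⟨f, by simp, h⟩).1⟩

theorem IsCycle.ends_eq_of_card_eq_two {G : MGraph V α} (hl : G.Loopless) {C : Finset α}
    (hC : G.IsCycle C) (h2 : #C = 2) : ∀ x ∈ C, ∀ y ∈ C, G.ends x = G.ends y := by
  obtain ⟨a, b, hab, rfl⟩ := card_eq_two.mp h2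
  simp [ends_eq_of_isCycle_pair hl hab hC]

theorem IsCycle.eq_pair_of_ends_eq {G : MGraph V α} (hl : G.Loopless) {C : Finset α}
    (hC : G.IsCycle C) {x y : α} (hx : x ∈ C) (hy : y ∈ C) (hxy : x ≠ y)
    (hends : G.ends x = G.ends y) : C = {x, y} := by
  obtain ⟨-, hCE, hdeg, hconn⟩ := hC
  -- `x` and `y` already use up the degree two at both of their ends
  have hinc : ∀ w ∈ G.ends x, ∀ g ∈ C, w ∈ G.ends g → g = x ∨ g = y := by
    intro w hw g hg hwg
    have hfilter : {x, y} = {e ∈ C | w ∈ G.ends e} := by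
      refine eq_of_subset_of_card_le ?_ ?_
      · simp [insert_subset_iff, hx, hy, hw, ← hends]
      · rw [← degIn_eq_card_filter hl hCE, hdeg w ⟨x, hx, hw⟩, card_pair hxy]
    have hg' : g ∈ ({x, y} : Finset α) := by rw [hfilter]; exact mem_filter.mpr ⟨hg, hwg⟩
    simpa using hg'
  obtain ⟨u, hu⟩ : ∃ u, u ∈ G.ends x := ⟨_, Sym2.out_fst_mem (G.ends x)⟩
  have hreach : ∀ w, Relation.ReflTransGen (G.Adj C) u w → w ∈ G.ends x := by
    intro w h
    induction h with
    | refl => exact hu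
    | @tail b c _ hbc ih =>
      obtain ⟨g, hg, hgbc⟩ := hbc
      have hc : c ∈ G.ends g := hgbc ▸ Sym2.mem_mk_right b c
      rcases hinc b ih g hg (hgbc ▸ Sym2.mem_mk_left b c) with rfl | rfl
      · exact hc
      · exact hends ▸ hc
  refine Subset.antisymm (fun g hg => ?_) (insert_subset hx (singleton_subset_iff.mpr hy))
  obtain ⟨w, hw⟩ : ∃ w, w ∈ G.ends g := ⟨_, Sym2.out_fst_mem (G.ends g)⟩
  have hwx := hreach w (hconn u w ⟨x, hx, hu⟩ ⟨g, hg, hw⟩)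
  simpa using hinc w hwx g hg hw

theorem TwoCycles.ends_eq_of_card_eq_three {G : MGraph V α} (hl : G.Loopless) {X : Finset α}
    (hX : G.TwoCycles X) (h3 : #X = 3) : ∀ x ∈ X, ∀ y ∈ X, G.ends x = G.ends y := by
  obtain ⟨C₁, C₂, hC₁, hC₂, h₁, h₂, hne⟩ := hX
  have hcard : ∀ C, G.IsCycle C → C ⊂ X → #C = 2 := fun C hC hCX => by
    have := card_lt_card hCX
    have := hC.two_le_card hl
    omega
  -- a cycle through a parallel pair is that pair, so neither cycle is all of `X`
  have hproper : ∀ C C', G.IsCycle C → G.IsCycle C' → C ⊆ X → C' ⊆ X → C ≠ C' → C ⊂ X := by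
    intro C C' hC hC' hCX hC'X hCC'
    refine Finset.ssubset_iff_subset_ne.mpr ⟨hCX, fun hCeq => ?_⟩
    subst hCeq
    obtain ⟨a, b, hab, rfl⟩ :=
      card_eq_two.mp (hcard C' hC' (Finset.ssubset_iff_subset_ne.mpr ⟨hC'X, hCC'.symm⟩))
    exact hCC' (hC.eq_pair_of_ends_eq hl (hC'X (by simp)) (hC'X (by simp)) hab
      (ends_eq_of_isCycle_pair hl hab hC'))
  have hcard₁ := hcard C₁ hC₁ (hproper C₁ C₂ hC₁ hC₂ h₁ h₂ hne)
  have hcard₂ := hcard C₂ hC₂ (hproper C₂ C₁ hC₂ hC₁ h₂ h₁ hne.symm)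
  obtain ⟨z, hz⟩ : (C₁ ∩ C₂).Nonempty := by
    rw [← card_pos]
    have := card_union_add_card_inter C₁ C₂
    have := card_le_card (union_subset h₁ h₂)
    omega
  have hcover : ∀ x ∈ X, x ∈ C₁ ∨ x ∈ C₂ := by
    intro x hx
    by_contra! hx'
    have hfill : ∀ C ⊆ X, x ∉ C → #C = 2 → C = X.erase x := fun C hCX hxC hC =>
      eq_of_subset_of_card_le (subset_erase.mpr ⟨hCX, hxC⟩)
        (by rw [card_erase_of_mem hx, h3, hC])
    exact hne ((hfill C₁ h₁ hx'.1 hcard₁).trans (hfill C₂ h₂ hx'.2 hcard₂).symm)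
  have hzX : ∀ x ∈ X, G.ends x = G.ends z := by
    intro x hx
    rcases hcover x hx with h | h
    · exact hC₁.ends_eq_of_card_eq_two hl hcard₁ x h z (mem_inter.mp hz).1
    · exact hC₂.ends_eq_of_card_eq_two hl hcard₂ x h z (mem_inter.mp hz).2
  exact fun x hx y hy => (hzX x hx).trans (hzX y hy).symm

theorem liftCircuit_triple_iff {G : MGraph V α} (hl : G.Loopless) {p q r : α} (hp : p ∈ G.E)
    (hq : q ∈ G.E) (hr : r ∈ G.E) (hpq : p ≠ q) (hpr : p ≠ r) (hqr : q ≠ r) :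
    G.LiftCircuit {p, q, r} ↔ G.ends q = G.ends p ∧ G.ends r = G.ends p := by
  have h3 : #{p, q, r} = 3 := card_eq_three.mpr ⟨p, q, r, hpq, hpr, hqr, rfl⟩
  constructor
  · intro h
    have hpar := h.2.1.ends_eq_of_card_eq_three hl h3
    exact ⟨hpar q (by simp) p (by simp), hpar r (by simp) p (by simp)⟩
  · rintro ⟨hqp, hrp⟩
    refine ⟨by simp [insert_subset_iff, hp, hq, hr], ⟨{p, q}, {p, r},
      isCycle_pair hl hp hq hpq hqp.symm, isCycle_pair hl hp hr hpr hrp.symm,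
      by simp [insert_subset_iff], by simp [insert_subset_iff], fun h => ?_⟩, fun Y hY hY₂ => ?_⟩
    · have hq' : q ∈ ({p, r} : Finset α) := h ▸ by simp
      simp [hpq.symm, hqr] at hq'
    · have := card_lt_card hY
      have := hY₂.three_le_card hl
      omega

theorem LiftEq.ends_triple_iff {G₁ : MGraph V₁ α} {G₂ : MGraph V₂ α} (hl₁ : G₁.Loopless)
    (hl₂ : G₂.Loopless) (hL : G₁.LiftEq G₂) {p q r : α} (hp : p ∈ G₁.E) (hq : q ∈ G₁.E)
    (hr : r ∈ G₁.E) (hpq : p ≠ q) (hpr : p ≠ r) (hqr : q ≠ r) :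
    G₁.ends q = G₁.ends p ∧ G₁.ends r = G₁.ends p ↔
      G₂.ends q = G₂.ends p ∧ G₂.ends r = G₂.ends p := by
  rw [← liftCircuit_triple_iff hl₁ hp hq hr hpq hpr hqr, hL.2,
    liftCircuit_triple_iff hl₂ (hL.1 ▸ hp) (hL.1 ▸ hq) (hL.1 ▸ hr) hpq hpr hqr]

theorem LiftEq.ends_eq_iff {G₁ : MGraph V₁ α} {G₂ : MGraph V₂ α} (hl₁ : G₁.Loopless)
    (hl₂ : G₂.Loopless) (hL : G₁.LiftEq G₂) {p : α} (hp : p ∈ G₁.E)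
    (h3 : 3 ≤ #{e ∈ G₁.E | G₁.ends e = G₁.ends p}) {e : α} (he : e ∈ G₁.E) :
    G₁.ends e = G₁.ends p ↔ G₂.ends e = G₂.ends p := by
  obtain ⟨q, hq, r, hr, hqr⟩ := one_lt_card.mp (by rw [card_erase_of_mem (by simp [hp])]; omega :
    1 < #(({e ∈ G₁.E | G₁.ends e = G₁.ends p}).erase p))
  simp only [mem_erase, mem_filter] at hq hr
  have hq₂ : G₂.ends q = G₂.ends p :=
    ((hL.ends_triple_iff hl₁ hl₂ hp hq.2.1 hr.2.1 (Ne.symm hq.1) (Ne.symm hr.1) hqr).mp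
      ⟨hq.2.2, hr.2.2⟩).1
  by_cases hep : e = p
  · simp [hep]
  by_cases heq : e = q
  · simp [heq, hq.2.2, hq₂]
  simpa [hq.2.2, hq₂] using
    hL.ends_triple_iff hl₁ hl₂ hp hq.2.1 he (Ne.symm hq.1) (Ne.symm hep) (Ne.symm heq)

theorem ParallelClass.eq_filter {G : MGraph V α} (hl : G.Loopless) {P : Finset α}
    (hP : G.ParallelClass P) {p : α} (hp : p ∈ P) :
    P = {e ∈ G.E | G.ends e = G.ends p} := by
  obtain ⟨hPE, -, -, hpar, hmax⟩ := hP
  ext e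
  refine ⟨fun he => mem_filter.mpr ⟨hPE he, ?_⟩, fun he => ?_⟩
  · by_cases hep : e = p
    · rw [hep]
    · exact ends_eq_of_isCycle_pair hl hep (hpar e he p hp hep).2
  · obtain ⟨heE, hends⟩ := mem_filter.mp he
    by_contra heP
    obtain ⟨q, hq, hnq⟩ := hmax e heE heP (hl e heE)
    have hqe : q ≠ e := fun h => heP (h ▸ hq)
    exact hnq ⟨hqe, isCycle_pair hl (hPE hq) heE hqe (by
      rw [hends]; by_cases hqp : q = p
      · rw [hqp]
      · exact ends_eq_of_isCycle_pair hl hqp (hpar q hq p hp hqp).2)⟩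

end

theorem isCycle_of_ends_eq_map {G₁ : MGraph V₁ α} {G₂ : MGraph V₂ α} (σ : V₁ ≃ V₂)
    {X : Finset α} (hXE : X ⊆ G₂.E) (hends : ∀ e ∈ X, G₂.ends e = (G₁.ends e).map σ)
    (hX : G₁.IsCycle X) : G₂.IsCycle X := by
  obtain ⟨hne, -, hdeg, hconn⟩ := hX
  have hmem : ∀ e ∈ X, ∀ v, σ v ∈ G₂.ends e ↔ v ∈ G₁.ends e := by
    intro e he v
    rw [hends e he, Sym2.mem_map]
    simp [σ.injective.eq_iff]
  have hvin : ∀ v, G₂.VIn X (σ v) → G₁.VIn X v := fun v ⟨e, he, hv⟩ =>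
    ⟨e, he, (hmem e he v).mp hv⟩
  refine ⟨hne, hXE, σ.surjective.forall.mpr fun v hv => ?_,
    σ.surjective.forall₂.mpr fun u v hu hv => ?_⟩
  · rw [← hdeg v (hvin v hv), degIn, degIn]
    refine sum_congr rfl fun e he => ?_
    simp only [← hmem e he v, hends e he, ← Sym2.map_mk, (Sym2.map.injective σ.injective).eq_iff]
  · exact (hconn u v (hvin u hu) (hvin v hv)).lift σ fun a b ⟨e, he, hab⟩ =>
      ⟨e, he, by rw [hends e he, hab, Sym2.map_mk]⟩

theorem twoIso_of_ends_eq_map {G₁ : MGraph V₁ α} {G₂ : MGraph V₂ α} (σ : V₁ ≃ V₂)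
    (hE : G₁.E = G₂.E) (hends : ∀ e ∈ G₁.E, G₂.ends e = (G₁.ends e).map σ) :
    G₁.TwoIso G₂ := by
  refine ⟨hE, fun X => ⟨fun hX => ?_, fun hX => ?_⟩⟩
  · exact isCycle_of_ends_eq_map σ (hE ▸ hX.2.1) (fun e he => hends e (hX.2.1 he)) hX
  · refine isCycle_of_ends_eq_map σ.symm (hE ▸ hX.2.1) (fun e he => ?_) hX
    rw [hends e (hE ▸ hX.2.1 he), Sym2.map_map]
    simp

theorem twoIso_of_card_eq_three [Fintype V₁] [Fintype V₂] (hV₁ : Fintype.card V₁ = 3)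
    (hV₂ : Fintype.card V₂ = 3) {G₁ : MGraph V₁ α} {G₂ : MGraph V₂ α} (hl₁ : G₁.Loopless)
    (hl₂ : G₂.Loopless) (hE : G₁.E = G₂.E) {s₁ s₂ : Sym2 V₁} {t₁ t₂ : Sym2 V₂} (hs₁ : ¬ s₁.IsDiag)
    (hs₂ : ¬ s₂.IsDiag) (ht₁ : ¬ t₁.IsDiag) (ht₂ : ¬ t₂.IsDiag) (hs : s₁ ≠ s₂) (ht : t₁ ≠ t₂)
    (h₁ : ∀ e ∈ G₁.E, G₁.ends e = s₁ ↔ G₂.ends e = t₁)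
    (h₂ : ∀ e ∈ G₁.E, G₁.ends e = s₂ ↔ G₂.ends e = t₂) : G₁.TwoIso G₂ := by
  obtain ⟨σ, hσ₁, hσ₂⟩ := Sym2.exists_equiv_map_eq_of_card_eq_three hV₁ hV₂ hs₁ hs₂ ht₁ ht₂ hs ht
  refine twoIso_of_ends_eq_map σ hE fun e he => ?_
  by_cases he₁ : G₁.ends e = s₁
  · rw [(h₁ e he).mp he₁, he₁, hσ₁]
  by_cases he₂ : G₁.ends e = s₂
  · rw [(h₂ e he).mp he₂, he₂, hσ₂]
  have hinj := Sym2.map.injective σ.injective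
  -- both sides are the unique pair of `V₂` other than `t₁` and `t₂`
  exact Sym2.eq_of_ne_of_ne_of_card_eq_three hV₂ ht₁ ht₂ (hl₂ e (hE ▸ he))
    (by rw [Sym2.isDiag_map σ.injective]; exact hl₁ e he) ht
    (mt (h₁ e he).mpr he₁) (mt (h₂ e he).mpr he₂)
    (hσ₁ ▸ hinj.ne he₁) (hσ₂ ▸ hinj.ne he₂)

end MGraph

theorem twoIso_three_vertices_two_big_parallel_classes_general
    {V₁ V₂ α : Type} [DecidableEq V₁] [DecidableEq V₂] [DecidableEq α]
    [Fintype V₁] [Fintype V₂]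
    (G₁ : MGraph V₁ α) (G₂ : MGraph V₂ α)
    (hV₁ : Fintype.card V₁ = 3) (hV₂ : Fintype.card V₂ = 3)
    (hl₁ : G₁.Loopless) (hl₂ : G₂.Loopless)
    (hL : G₁.LiftEq G₂)
    (hP : ∃ P₁ P₂ : Finset α, G₁.ParallelClass P₁ ∧ G₁.ParallelClass P₂ ∧
      P₁ ≠ P₂ ∧ 3 ≤ P₁.card ∧ 3 ≤ P₂.card) :
    G₁.TwoIso G₂ := by
  obtain ⟨P₁, P₂, hP₁, hP₂, hne, hcard₁, hcard₂⟩ := hP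
  obtain ⟨p₁, hp₁⟩ := hP₁.2.1
  obtain ⟨p₂, hp₂⟩ := hP₂.2.1
  have hE₁ := hP₁.1 hp₁
  have hE₂ := hP₂.1 hp₂
  rw [hP₁.eq_filter hl₁ hp₁] at hcard₁ hne
  rw [hP₂.eq_filter hl₁ hp₂] at hcard₂ hne
  have hiff₁ := fun e (he : e ∈ G₁.E) => hL.ends_eq_iff hl₁ hl₂ hE₁ hcard₁ he
  have hiff₂ := fun e (he : e ∈ G₁.E) => hL.ends_eq_iff hl₁ hl₂ hE₂ hcard₂ he
  have hs : G₁.ends p₁ ≠ G₁.ends p₂ := fun h => hne (by rw [h])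
  have ht : G₂.ends p₁ ≠ G₂.ends p₂ := fun h => hs ((hiff₁ p₂ hE₂).mpr h.symm).symm
  exact MGraph.twoIso_of_card_eq_three hV₁ hV₂ hl₁ hl₂ hL.1 (hl₁ p₁ hE₁) (hl₁ p₂ hE₂)
    (hl₂ p₁ (hL.1 ▸ hE₁)) (hl₂ p₂ (hL.1 ▸ hE₂)) hs ht hiff₁ hiff₂

/-- cosimple loopless 2-edge-connected graphs on three vertices
with `L(G₁) = L(G₂)`, at least two circuits, and two parallel classes of `G₁` of
size at least three, are 2-isomorphic. -/
theorem twoIso_three_vertices_two_big_parallel_classes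
    {V₁ V₂ α : Type} [DecidableEq V₁] [DecidableEq V₂] [DecidableEq α]
    [Fintype V₁] [Fintype V₂]
    (G₁ : MGraph V₁ α) (G₂ : MGraph V₂ α)
    (hV₁ : Fintype.card V₁ = 3) (hV₂ : Fintype.card V₂ = 3)
    (hcs₁ : G₁.CoSimple) (hcs₂ : G₂.CoSimple)
    (hl₁ : G₁.Loopless) (hl₂ : G₂.Loopless)
    (h2ec₁ : G₁.TwoEdgeConnected) (h2ec₂ : G₂.TwoEdgeConnected)
    (hL : G₁.LiftEq G₂) (h2 : G₁.TwoLiftCircuits)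
    (hP : ∃ P₁ P₂ : Finset α, G₁.ParallelClass P₁ ∧ G₁.ParallelClass P₂ ∧
      P₁ ≠ P₂ ∧ 3 ≤ P₁.card ∧ 3 ≤ P₂.card) :
    G₁.TwoIso G₂ :=
  twoIso_three_vertices_two_big_parallel_classes_general G₁ G₂ hV₁ hV₂ hl₁ hl₂ hL hP
end

section
/- Let G1 and G2 be graphs on a common edge set with L(G1) = L(G2), such that L(G1) has at least two circuits and G1 and G2 have no loops. Then any three pairwise-parallel edges of G1 are pairwise parallel in G2. -/
open Finset

namespace MGraph

section Aux

set_option linter.unusedSectionVars false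

variable {V α : Type} [DecidableEq V] [DecidableEq α]

lemma sym2_rep (p : Sym2 V) : ∃ u v, p = s(u, v) := by
  induction p using Sym2.ind with
  | _ x y => exact ⟨x, y, rfl⟩

lemma term_eq_one {G : MGraph V α} {e : α} {u v w : V} (h : G.ends e = s(u, v))
    (huv : u ≠ v) (hw : w = u ∨ w = v) :
    (if G.ends e = s(w, w) then 2 else if w ∈ G.ends e then 1 else 0) = 1 := by
  rw [h, if_neg, if_pos]
  · rw [Sym2.mem_iff]; tauto
  · rw [Sym2.eq_iff]; rintro (⟨h1, h2⟩ | ⟨h1, h2⟩) <;> exact huv (h1.trans h2.symm)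

lemma term_eq_zero {G : MGraph V α} {e : α} {w : V} (h : w ∉ G.ends e) :
    (if G.ends e = s(w, w) then 2 else if w ∈ G.ends e then 1 else 0) = 0 := by
  rw [if_neg, if_neg h]
  intro h'; exact h (by rw [h']; simp)

lemma term_pos {G : MGraph V α} {e : α} {w : V} (h : w ∈ G.ends e) :
    1 ≤ (if G.ends e = s(w, w) then 2 else if w ∈ G.ends e then 1 else 0) := by
  by_cases hc : G.ends e = s(w, w)
  · simp [hc]
  · simp [hc, h]

lemma two_cycle_of_ends_eq {G : MGraph V α} {e f : α} (he : e ∈ G.E) (hf : f ∈ G.E)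
    (hef : e ≠ f) (heq : G.ends e = G.ends f) (hd : ¬ (G.ends e).IsDiag) :
    G.IsCycle {e, f} := by
  obtain ⟨u, v, huv⟩ := sym2_rep (G.ends e)
  have hune : u ≠ v := by rw [huv] at hd; simpa [Sym2.mk_isDiag_iff] using hd
  have hf' : G.ends f = s(u, v) := heq ▸ huv
  have hmem : ∀ w, G.VIn {e, f} w → w = u ∨ w = v := by
    rintro w ⟨h, hh, hwh⟩
    have : G.ends h = s(u, v) := by
      rcases Finset.mem_insert.mp hh with h1 | h1
      · rw [h1, huv]
      · rw [Finset.mem_singleton] at h1; rw [h1, hf']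
    rw [this, Sym2.mem_iff] at hwh; exact hwh
  refine ⟨⟨e, by simp⟩, ?_, ?_, ?_⟩
  · intro x hx
    rcases Finset.mem_insert.mp hx with h1 | h1
    · rw [h1]; exact he
    · rw [Finset.mem_singleton] at h1; rw [h1]; exact hf
  · intro w hw
    have hw' := hmem w hw
    rw [degIn, Finset.sum_pair hef, term_eq_one huv hune hw', term_eq_one hf' hune hw']
  · intro x y hx hy
    have hx' := hmem x hx
    have hy' := hmem y hy
    have huvadj : G.Adj {e, f} u v := ⟨e, by simp, huv⟩
    have hvuadj : G.Adj {e, f} v u := ⟨e, by simp, by rw [huv, Sym2.eq_swap]⟩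
    rcases hx' with rfl | rfl <;> rcases hy' with rfl | rfl
    · exact .refl
    · exact .single huvadj
    · exact .single hvuadj
    · exact .refl

lemma ends_eq_of_two_cycle {G : MGraph V α} {e f : α} (hef : e ≠ f)
    (h : G.IsCycle {e, f}) (hde : ¬ (G.ends e).IsDiag) (hdf : ¬ (G.ends f).IsDiag) :
    G.ends e = G.ends f := by
  obtain ⟨u, v, huv⟩ := sym2_rep (G.ends e)
  have hune : u ≠ v := by rw [huv] at hde; simpa [Sym2.mk_isDiag_iff] using hde
  have hmem : ∀ w, w = u ∨ w = v → w ∈ G.ends f := by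
    intro w hw
    have hvin : G.VIn {e, f} w := ⟨e, by simp, by rw [huv, Sym2.mem_iff]; tauto⟩
    have hdeg := h.2.2.1 w hvin
    rw [degIn, Finset.sum_pair hef, term_eq_one huv hune hw] at hdeg
    by_contra hne
    rw [term_eq_zero hne] at hdeg
    omega
  have hu := hmem u (Or.inl rfl)
  have hv := hmem v (Or.inr rfl)
  obtain ⟨u', v', heq'⟩ := sym2_rep (G.ends f)
  rw [heq', Sym2.mem_iff] at hu hv
  rw [huv, heq', Sym2.eq_iff]
  rcases hu with hu | hu <;> rcases hv with hv | hv
  · exact absurd (hu.trans hv.symm) hune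
  · left; exact ⟨hu, hv⟩
  · right; exact ⟨hu, hv⟩
  · exact absurd (hu.trans hv.symm) hune

lemma two_le_card_of_cycle {G : MGraph V α} {C : Finset α} (h : G.IsCycle C)
    (hd : ∀ a ∈ C, ¬ (G.ends a).IsDiag) : 2 ≤ C.card := by
  obtain ⟨c, hc⟩ := h.1
  obtain ⟨u, v, huv⟩ := sym2_rep (G.ends c)
  have hune : u ≠ v := by
    have := hd c hc; rw [huv] at this; simpa [Sym2.mk_isDiag_iff] using this
  have hdeg := h.2.2.1 u ⟨c, hc, by rw [huv]; simp⟩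
  rw [degIn, ← Finset.add_sum_erase _ _ hc, term_eq_one huv hune (Or.inl rfl)] at hdeg
  have hnon : (C.erase c).Nonempty := by
    by_contra hne
    rw [Finset.not_nonempty_iff_eq_empty] at hne
    rw [hne] at hdeg
    simp at hdeg
  obtain ⟨d, hdm⟩ := hnon
  exact Finset.one_lt_card.mpr ⟨c, hc, d, (Finset.mem_erase.mp hdm).2,
    ((Finset.mem_erase.mp hdm).1).symm⟩

lemma cycle_eq_pair {G : MGraph V α} {C : Finset α} {a b : α} (h : G.IsCycle C)
    (hab : a ≠ b) (ha : a ∈ C) (hb : b ∈ C) (hp : G.IsCycle {a, b})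
    (hd : ∀ x ∈ C, ¬ (G.ends x).IsDiag) : C = {a, b} := by
  by_contra hne
  have hsub : {a, b} ⊆ C := by
    intro x hx
    rcases Finset.mem_insert.mp hx with h1 | h1
    · rw [h1]; exact ha
    · rw [Finset.mem_singleton] at h1; rw [h1]; exact hb
  obtain ⟨c, hcC, hcp⟩ : ∃ c ∈ C, c ∉ ({a, b} : Finset α) := by
    by_contra h'
    push_neg at h'
    exact hne (Finset.Subset.antisymm h' hsub)
  have heq : G.ends a = G.ends b := ends_eq_of_two_cycle hab hp (hd a ha) (hd b hb)
  obtain ⟨u, v, huv⟩ := sym2_rep (G.ends a)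
  have hune : u ≠ v := by
    have := hd a ha; rw [huv] at this; simpa [Sym2.mk_isDiag_iff] using this
  have hb' : G.ends b = s(u, v) := heq ▸ huv
  have havoid : ∀ w, w = u ∨ w = v → ∀ x ∈ C \ {a, b}, w ∉ G.ends x := by
    intro w hw
    have hdeg := h.2.2.1 w ⟨a, ha, by rw [huv, Sym2.mem_iff]; tauto⟩
    rw [degIn, ← Finset.sum_sdiff hsub, Finset.sum_pair hab,
        term_eq_one huv hune hw, term_eq_one hb' hune hw] at hdeg
    have hz : ∀ x ∈ C \ {a, b},
        (if G.ends x = s(w, w) then 2 else if w ∈ G.ends x then 1 else 0) = 0 :=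
      Finset.sum_eq_zero_iff.mp (by omega)
    intro x hx hmem
    have h1 := hz x hx
    have h2 := term_pos (G := G) hmem
    omega
  have hcC' : c ∈ C \ {a, b} := Finset.mem_sdiff.mpr ⟨hcC, hcp⟩
  obtain ⟨w, w', hw⟩ := sym2_rep (G.ends c)
  have hinv : ∀ x, Relation.ReflTransGen (G.Adj C) w x → (x ≠ u ∧ x ≠ v) := by
    intro x hx
    induction hx with
    | refl =>
      constructor
      · rintro rfl; exact havoid w (Or.inl rfl) c hcC' (by rw [hw]; simp)
      · rintro rfl; exact havoid w (Or.inr rfl) c hcC' (by rw [hw]; simp)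
    | tail hstep hadj ih =>
      rename_i y z
      obtain ⟨h', hh', hends⟩ := hadj
      by_cases hmem : h' ∈ ({a, b} : Finset α)
      · exfalso
        have hcase : G.ends h' = s(u, v) := by
          rcases Finset.mem_insert.mp hmem with h1 | h1
          · rw [h1, huv]
          · rw [Finset.mem_singleton] at h1; rw [h1, hb']
        have hmem2 : y ∈ s(u, v) := by rw [← hcase, hends]; exact Sym2.mem_mk_left _ _
        rw [Sym2.mem_iff] at hmem2
        rcases hmem2 with h1 | h1
        · exact ih.1 h1
        · exact ih.2 h1
      · have hsd : h' ∈ C \ {a, b} := Finset.mem_sdiff.mpr ⟨hh', hmem⟩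
        constructor
        · intro hz
          exact havoid z (Or.inl hz) h' hsd (by rw [hends]; exact Sym2.mem_mk_right _ _)
        · intro hz
          exact havoid z (Or.inr hz) h' hsd (by rw [hends]; exact Sym2.mem_mk_right _ _)
  have hrtg : Relation.ReflTransGen (G.Adj C) w u :=
    h.2.2.2 w u ⟨c, hcC, by rw [hw]; simp⟩ ⟨a, ha, by rw [huv]; simp⟩
  exact (hinv u hrtg).1 rfl


lemma pair_cases {e f g : α} {C : Finset α} (hC : C ⊆ {e, f, g}) (h2 : C.card = 2) :
    C = {e, f} ∨ C = {e, g} ∨ C = {f, g} := by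
  obtain ⟨a, b, hab, rfl⟩ := Finset.card_eq_two.mp h2
  have ha : a = e ∨ a = f ∨ a = g := by
    have := hC (Finset.mem_insert_self a {b}); simpa using this
  have hb : b = e ∨ b = f ∨ b = g := by
    have := hC (by simp : b ∈ ({a, b} : Finset α)); simpa using this
  rcases ha with rfl | rfl | rfl <;> rcases hb with rfl | rfl | rfl <;>
    first
      | exact absurd rfl hab
      | exact Or.inl rfl
      | exact Or.inl (Finset.pair_comm _ _)
      | exact Or.inr (Or.inl rfl)
      | exact Or.inr (Or.inl (Finset.pair_comm _ _))
      | exact Or.inr (Or.inr rfl)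
      | exact Or.inr (Or.inr (Finset.pair_comm _ _))

end Aux

end MGraph

/-- if `L(G₁) = L(G₂)` with at least two circuits and both graphs
are loopless (so their loop sets agree), then any three pairwise-parallel edges
of `G₁` are pairwise parallel in `G₂`. -/
theorem parallel_triple_transfer
    {V₁ V₂ α : Type} [DecidableEq V₁] [DecidableEq V₂] [DecidableEq α]
    (G₁ : MGraph V₁ α) (G₂ : MGraph V₂ α)
    (hL : G₁.LiftEq G₂) (h2 : G₁.TwoLiftCircuits)
    (hloops : ∀ e ∈ G₁.E, ((G₁.ends e).IsDiag ↔ (G₂.ends e).IsDiag))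
    (hl₁ : G₁.Loopless) (hl₂ : G₂.Loopless) :
    ∀ e f g : α, e ≠ f → e ≠ g → f ≠ g →
      G₁.Parallel e f → G₁.Parallel e g → G₁.Parallel f g →
      G₂.Parallel e f ∧ G₂.Parallel e g ∧ G₂.Parallel f g := by
  intro e f g hef heg hfg hPef hPeg hPfg
  obtain ⟨-, hCef⟩ := hPef
  obtain ⟨-, hCeg⟩ := hPeg
  obtain ⟨-, hCfg⟩ := hPfg
  have he1 : e ∈ G₁.E := hCef.2.1 (by simp)
  have hf1 : f ∈ G₁.E := hCef.2.1 (by simp)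
  have hg1 : g ∈ G₁.E := hCeg.2.1 (by simp)
  have hcard : ({e, f, g} : Finset α).card = 3 := by
    rw [Finset.card_insert_of_notMem (by simp [hef, heg]),
      Finset.card_insert_of_notMem (by simp [hfg]), Finset.card_singleton]
  have hXsub : ({e, f, g} : Finset α) ⊆ G₁.E := by
    intro x hx
    simp only [Finset.mem_insert, Finset.mem_singleton] at hx
    rcases hx with rfl | rfl | rfl <;> assumption
  have hd₁ : ∀ x ∈ ({e, f, g} : Finset α), ¬ (G₁.ends x).IsDiag :=
    fun x hx => hl₁ x (hXsub hx)
  have hcirc : G₁.LiftCircuit {e, f, g} := by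
    refine ⟨hXsub, ⟨{e, f}, {e, g}, hCef, hCeg, ?_, ?_, ?_⟩, ?_⟩
    · intro x hx; simp only [Finset.mem_insert, Finset.mem_singleton] at hx ⊢; tauto
    · intro x hx; simp only [Finset.mem_insert, Finset.mem_singleton] at hx ⊢; tauto
    · intro hcontra
      have : f ∈ ({e, g} : Finset α) := hcontra ▸ (by simp)
      simp only [Finset.mem_insert, Finset.mem_singleton] at this
      tauto
    · rintro Y hY ⟨C₁, C₂, hc1, hc2, hs1, hs2, hne⟩
      have hYsub := hY.subset
      have hYcard : Y.card ≤ 2 := by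
        have := Finset.card_lt_card hY
        omega
      have h1 : 2 ≤ C₁.card :=
        MGraph.two_le_card_of_cycle hc1 (fun x hx => hd₁ x (hYsub (hs1 hx)))
      have h2 : 2 ≤ C₂.card :=
        MGraph.two_le_card_of_cycle hc2 (fun x hx => hd₁ x (hYsub (hs2 hx)))
      have hcY1 := Finset.card_le_card hs1
      have hcY2 := Finset.card_le_card hs2
      have e1 : C₁ = Y := Finset.eq_of_subset_of_card_le hs1 (by omega)
      have e2 : C₂ = Y := Finset.eq_of_subset_of_card_le hs2 (by omega)
      exact hne (e1.trans e2.symm)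
  have hcirc₂ : G₂.LiftCircuit {e, f, g} := (hL.2 _).mp hcirc
  have hXsub₂ : ({e, f, g} : Finset α) ⊆ G₂.E := hcirc₂.1
  have hd₂ : ∀ x ∈ ({e, f, g} : Finset α), ¬ (G₂.ends x).IsDiag :=
    fun x hx => hl₂ x (hXsub₂ hx)
  obtain ⟨C₁, C₂, hc1, hc2, hs1, hs2, hne⟩ := hcirc₂.2.1
  have key : ∀ C D : Finset α, G₂.IsCycle C → G₂.IsCycle D → C ⊆ {e, f, g} →
      D ⊆ {e, f, g} → C ≠ D → C.card ≠ 3 := by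
    intro C D hC hD hCs hDs hCD hC3
    have hCX : C = {e, f, g} := Finset.eq_of_subset_of_card_le hCs (by omega)
    have hD2 : 2 ≤ D.card := MGraph.two_le_card_of_cycle hD (fun x hx => hd₂ x (hDs hx))
    have hDle : D.card ≤ 3 := hcard ▸ Finset.card_le_card hDs
    rcases (by omega : D.card = 2 ∨ D.card = 3) with h | h
    · obtain ⟨a, b, hab, rfl⟩ := Finset.card_eq_two.mp h
      have ha : a ∈ C := by rw [hCX]; exact hDs (by simp)
      have hb : b ∈ C := by rw [hCX]; exact hDs (by simp)
      have := MGraph.cycle_eq_pair hC hab ha hb hD (fun x hx => hd₂ x (hCX ▸ hx))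
      rw [this] at hC3
      rw [Finset.card_insert_of_notMem (by simp [hab]), Finset.card_singleton] at hC3
      omega
    · have hDX : D = {e, f, g} := Finset.eq_of_subset_of_card_le hDs (by omega)
      exact hCD (hCX.trans hDX.symm)
  have h1le : 2 ≤ C₁.card := MGraph.two_le_card_of_cycle hc1 (fun x hx => hd₂ x (hs1 hx))
  have h2le : 2 ≤ C₂.card := MGraph.two_le_card_of_cycle hc2 (fun x hx => hd₂ x (hs2 hx))
  have h1le3 : C₁.card ≤ 3 := hcard ▸ Finset.card_le_card hs1
  have h2le3 : C₂.card ≤ 3 := hcard ▸ Finset.card_le_card hs2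
  have h1c : C₁.card = 2 := by
    have := key C₁ C₂ hc1 hc2 hs1 hs2 hne
    omega
  have h2c : C₂.card = 2 := by
    have := key C₂ C₁ hc2 hc1 hs2 hs1 hne.symm
    omega
  have hEE : ∀ {a b : α}, a ≠ b → G₂.IsCycle {a, b} → a ∈ ({e, f, g} : Finset α) →
      b ∈ ({e, f, g} : Finset α) → G₂.ends a = G₂.ends b :=
    fun hab hcyc ha hb => MGraph.ends_eq_of_two_cycle hab hcyc (hd₂ _ ha) (hd₂ _ hb)
  have hme : e ∈ ({e, f, g} : Finset α) := by simp
  have hmf : f ∈ ({e, f, g} : Finset α) := by simp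
  have hmg : g ∈ ({e, f, g} : Finset α) := by simp
  have hsuff : G₂.ends e = G₂.ends f ∧ G₂.ends f = G₂.ends g := by
    rcases MGraph.pair_cases hs1 h1c with h1 | h1 | h1 <;>
      rcases MGraph.pair_cases hs2 h2c with h2 | h2 | h2
    · exact absurd (h1.trans h2.symm) hne
    · have q1 := hEE hef (h1 ▸ hc1) hme hmf
      have q2 := hEE heg (h2 ▸ hc2) hme hmg
      exact ⟨q1, q1.symm.trans q2⟩
    · have q1 := hEE hef (h1 ▸ hc1) hme hmf
      have q2 := hEE hfg (h2 ▸ hc2) hmf hmg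
      exact ⟨q1, q2⟩
    · have q1 := hEE heg (h1 ▸ hc1) hme hmg
      have q2 := hEE hef (h2 ▸ hc2) hme hmf
      exact ⟨q2, q2.symm.trans q1⟩
    · exact absurd (h1.trans h2.symm) hne
    · have q1 := hEE heg (h1 ▸ hc1) hme hmg
      have q2 := hEE hfg (h2 ▸ hc2) hmf hmg
      exact ⟨q1.trans q2.symm, q2⟩
    · have q1 := hEE hfg (h1 ▸ hc1) hmf hmg
      have q2 := hEE hef (h2 ▸ hc2) hme hmf
      exact ⟨q2, q1⟩
    · have q1 := hEE hfg (h1 ▸ hc1) hmf hmg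
      have q2 := hEE heg (h2 ▸ hc2) hme hmg
      exact ⟨q2.trans q1.symm, q1⟩
    · exact absurd (h1.trans h2.symm) hne
  obtain ⟨q1, q2⟩ := hsuff
  have he2 : e ∈ G₂.E := hXsub₂ hme
  have hf2 : f ∈ G₂.E := hXsub₂ hmf
  have hg2 : g ∈ G₂.E := hXsub₂ hmg
  exact ⟨⟨hef, MGraph.two_cycle_of_ends_eq he2 hf2 hef q1 (hd₂ e hme)⟩,
    ⟨heg, MGraph.two_cycle_of_ends_eq he2 hg2 heg (q1.trans q2) (hd₂ e hme)⟩,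
    ⟨hfg, MGraph.two_cycle_of_ends_eq hf2 hg2 hfg q2 (hd₂ f hmf)⟩⟩
end
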